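/- Closed form for the Haar wavelet: with ψ the Haar function (ψ = 1 on [0,1/2), ψ = −1 on [1/2,1], 0 elsewhere) and f(t) = e^{−iAt²/(2B)}, the special affine wavelet transform equals W^M_ψ[f](a,b) = (√(iB)/√(2πa)) · (1/(a−p)) · exp{(i/(2B))(−2a(Dp−Bq) + D(a²+p²))} · exp{ib(p−a)/B} · [2 exp{ia(p−a)/(2B)} − 1 − exp{ia(p−a)/B}], provided p ≠ a. -/

import Mathlib

open MeasureTheory Complex

/-- The continuous special affine wavelet transform (explicit integral form). -/
noncomputable def W19 (A B D p q : ℝ) (ψ f : ℝ → ℂ) (a b : ℝ) : ℂ :=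
  (((2 * Real.pi * Complex.I * (B:ℂ) * (a:ℂ)) ^ ((1:ℂ)/2)))⁻¹ *
    ∫ t : ℝ, f t * starRingEnd ℂ (ψ ((t-b)/a)) *
      Complex.exp ((Complex.I / (2*(B:ℂ))) *
        ((A*t^2 + 2*t*(p-a) - 2*a*(D*p - B*q) + D*(a^2+p^2) : ℝ) : ℂ))

/-- The Haar wavelet. -/
noncomputable def haar (t : ℝ) : ℂ :=
  if 0 ≤ t ∧ t < 1/2 then 1 else if 1/2 ≤ t ∧ t ≤ 1 then -1 else 0

open Set

/-!
The chirp `e^{-iAt²/(2B)}` cancels the quadratic part of the kernel's phase, so the transform is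
a constant times `∫ conj ψ((t-b)/a) e^{ct} dt` with `c = i(p-a)/B`, which is nonzero as `p ≠ a`.
For the real-valued Haar wavelet this integral is
`∫_b^{b+a/2} e^{ct} - ∫_{b+a/2}^{b+a} e^{ct} = e^{cb}(2e^{ca/2} - 1 - e^{ca})/c`.
Finally `√(2πiBa) = √(2πa)·√(iB)` and `1/(√(iB)·c) = √(iB)/(iB·c) = √(iB)/(a-p)`.
-/

lemma conj_haar (t : ℝ) : starRingEnd ℂ (haar t) = haar t := by
  unfold haar; split_ifs <;> simp

lemma haar_div_mul_eq_indicator_sub {a : ℝ} (ha : 0 < a) (b : ℝ) (g : ℝ → ℂ) (t : ℝ) :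
    haar ((t - b) / a) * g t
      = (Ico b (b + a / 2)).indicator g t - (Icc (b + a / 2) (b + a)).indicator g t := by
  have h₁ : 0 ≤ (t - b) / a ↔ b ≤ t := by
    rw [le_div_iff₀ ha]; constructor <;> intro <;> linarith
  have h₂ : (t - b) / a < 1 / 2 ↔ t < b + a / 2 := by
    rw [div_lt_iff₀ ha]; constructor <;> intro <;> linarith
  have h₃ : 1 / 2 ≤ (t - b) / a ↔ b + a / 2 ≤ t := by
    rw [le_div_iff₀ ha]; constructor <;> intro <;> linarith
  have h₄ : (t - b) / a ≤ 1 ↔ t ≤ b + a := by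
    rw [div_le_iff₀ ha]; constructor <;> intro <;> linarith
  simp only [haar, indicator_apply, mem_Ico, mem_Icc, h₁, h₂, h₃, h₄]
  split_ifs <;> grind

lemma integral_haar_div_mul {a : ℝ} (ha : 0 < a) (b : ℝ) {g : ℝ → ℂ}
    (hg : IntegrableOn g (Icc b (b + a))) :
    ∫ t, haar ((t - b) / a) * g t
      = (∫ t in b..b + a / 2, g t) - ∫ t in b + a / 2..b + a, g t := by
  have hb₁ : b ≤ b + a / 2 := by linarith
  have hb₂ : b + a / 2 ≤ b + a := by linarith
  have hg₁ : IntegrableOn g (Ico b (b + a / 2)) :=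
    hg.mono_set fun t ht => ⟨ht.1, by linarith [ht.2]⟩
  have hg₂ : IntegrableOn g (Icc (b + a / 2) (b + a)) :=
    hg.mono_set fun t ht => ⟨by linarith [ht.1], ht.2⟩
  simp_rw [haar_div_mul_eq_indicator_sub ha b g]
  rw [integral_sub (hg₁.integrable_indicator measurableSet_Ico)
      (hg₂.integrable_indicator measurableSet_Icc),
    integral_indicator measurableSet_Ico, integral_indicator measurableSet_Icc,
    intervalIntegral.integral_of_le hb₁, intervalIntegral.integral_of_le hb₂,
    setIntegral_congr_set Ico_ae_eq_Ioc, integral_Icc_eq_integral_Ioc]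

lemma integral_haar_div_mul_cexp {a : ℝ} (ha : 0 < a) (b : ℝ) {c : ℂ} (hc : c ≠ 0) :
    ∫ t : ℝ, haar ((t - b) / a) * cexp (c * t)
      = cexp (c * b) * (2 * cexp (c * (a / 2 : ℝ)) - 1 - cexp (c * a)) / c := by
  have hexp : Continuous fun t : ℝ => cexp (c * t) := by fun_prop
  rw [integral_haar_div_mul ha b hexp.integrableOn_Icc, integral_exp_mul_complex hc,
    integral_exp_mul_complex hc]
  simp only [ofReal_add, mul_add, exp_add]
  ring

lemma W19_chirp_eq (A D p q : ℝ) {B : ℝ} (hB : B ≠ 0) (ψ : ℝ → ℂ) (a b : ℝ) :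
    W19 A B D p q ψ (fun t => cexp (-I * A * (t : ℂ) ^ 2 / (2 * B))) a b
      = ((2 * Real.pi * I * B * a) ^ ((1 : ℂ) / 2))⁻¹ *
        cexp (I / (2 * B) * ((-2 * a * (D * p - B * q) + D * (a ^ 2 + p ^ 2) : ℝ) : ℂ)) *
        ∫ t : ℝ, starRingEnd ℂ (ψ ((t - b) / a)) * cexp (I * ((p - a) / B : ℝ) * t) := by
  have hB' : (B : ℂ) ≠ 0 := ofReal_ne_zero.2 hB
  rw [W19, mul_assoc _ (cexp _), ← integral_const_mul (cexp _)]
  congr 1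
  refine integral_congr_ae (.of_forall fun t => ?_)
  dsimp only
  have hphase : cexp (-I * A * (t : ℂ) ^ 2 / (2 * B)) *
      cexp (I / (2 * B) *
        ((A * t ^ 2 + 2 * t * (p - a) - 2 * a * (D * p - B * q) + D * (a ^ 2 + p ^ 2) : ℝ) : ℂ))
      = cexp (I / (2 * B) * ((-2 * a * (D * p - B * q) + D * (a ^ 2 + p ^ 2) : ℝ) : ℂ)) *
        cexp (I * ((p - a) / B : ℝ) * t) := by
    rw [← exp_add, ← exp_add]
    congr 1
    push_cast
    field_simp
    ring
  linear_combination starRingEnd ℂ (ψ ((t - b) / a)) * hphase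

lemma ofReal_mul_cpow {r : ℝ} (hr : 0 < r) (z w : ℂ) :
    ((r : ℂ) * z) ^ w = (r : ℂ) ^ w * z ^ w := by
  rcases eq_or_ne z 0 with rfl | hz
  · rcases eq_or_ne w 0 with rfl | hw <;> simp [*]
  rw [cpow_def_of_ne_zero (mul_ne_zero (ofReal_ne_zero.2 hr.ne') hz), log_ofReal_mul hr hz,
    add_mul, exp_add, cpow_def_of_ne_zero (ofReal_ne_zero.2 hr.ne'), cpow_def_of_ne_zero hz,
    ofReal_log hr.le]

lemma inv_cpow_half_div (z c : ℂ) :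
    (z ^ ((1 : ℂ) / 2))⁻¹ / c = z ^ ((1 : ℂ) / 2) / (z * c) := by
  have hsq : (z ^ ((1 : ℂ) / 2)) ^ 2 = z := by rw [one_div, cpow_ofNat_inv_pow]
  generalize z ^ ((1 : ℂ) / 2) = s at hsq ⊢
  subst hsq
  rcases eq_or_ne s 0 with rfl | hs
  · simp
  field_simp

lemma ofReal_sqrt_eq_cpow {r : ℝ} (hr : 0 ≤ r) :
    ((√r : ℝ) : ℂ) = (r : ℂ) ^ ((1 : ℂ) / 2) := by
  rw [Real.sqrt_eq_rpow, ofReal_cpow hr]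
  norm_num

theorem sawt_haar_chirp_general (A B D p q : ℝ) (hB : B ≠ 0)
    (a b : ℝ) (ha : 0 < a) (hpa : p ≠ a) :
    W19 A B D p q haar
        (fun t => Complex.exp (-Complex.I * (A:ℂ) * (t:ℂ)^2 / (2*(B:ℂ)))) a b
      = ((Complex.I * (B:ℂ)) ^ ((1:ℂ)/2) / ((Real.sqrt (2 * Real.pi * a) : ℝ) : ℂ)) *
        (((a - p : ℝ) : ℂ))⁻¹ *
        Complex.exp ((Complex.I / (2*(B:ℂ))) *
          ((-2*a*(D*p - B*q) + D*(a^2+p^2) : ℝ) : ℂ)) *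
        Complex.exp (Complex.I * ((b*(p-a)/B : ℝ) : ℂ)) *
        (2 * Complex.exp (Complex.I * ((a*(p-a)/(2*B) : ℝ) : ℂ)) - 1
          - Complex.exp (Complex.I * ((a*(p-a)/B : ℝ) : ℂ))) := by
  set c : ℂ := I * ((p - a) / B : ℝ) with hc_def
  have hc : c ≠ 0 :=
    mul_ne_zero I_ne_zero (ofReal_ne_zero.2 (div_ne_zero (sub_ne_zero.2 hpa) hB))
  have hroot : (2 * Real.pi * I * B * a : ℂ) ^ ((1 : ℂ) / 2)
      = ((√(2 * Real.pi * a) : ℝ) : ℂ) * (I * B) ^ ((1 : ℂ) / 2) := by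
    rw [ofReal_sqrt_eq_cpow (by positivity), ← ofReal_mul_cpow (by positivity)]
    push_cast
    ring_nf
  have hprefactor : (((√(2 * Real.pi * a) : ℝ) : ℂ) * (I * B) ^ ((1 : ℂ) / 2))⁻¹ / c
      = (I * B) ^ ((1 : ℂ) / 2) / ((√(2 * Real.pi * a) : ℝ) : ℂ) * ((a - p : ℝ) : ℂ)⁻¹ := by
    have hIBc : I * B * c = ((a - p : ℝ) : ℂ) := by
      have hB' : (B : ℂ) ≠ 0 := ofReal_ne_zero.2 hB
      rw [hc_def]
      push_cast
      field_simp
      linear_combination (p - a : ℂ) * I_sq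
    rw [mul_inv, mul_div_assoc, inv_cpow_half_div, hIBc]
    ring
  have hcb : c * b = I * ((b * (p - a) / B : ℝ) : ℂ) := by rw [hc_def]; push_cast; ring
  have hca₂ : c * (a / 2 : ℝ) = I * ((a * (p - a) / (2 * B) : ℝ) : ℂ) := by
    rw [hc_def]; push_cast; ring
  have hca : c * a = I * ((a * (p - a) / B : ℝ) : ℂ) := by rw [hc_def]; push_cast; ring
  simp only [W19_chirp_eq A D p q hB, conj_haar, ← hc_def]
  rw [integral_haar_div_mul_cexp ha b hc, hroot, hcb, hca₂, hca, ← hprefactor]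
  ring

/-- Closed form of the special affine wavelet transform of the chirp
f(t) = e^{−iAt²/(2B)} with the Haar window. -/
theorem sawt_haar_chirp (A B C D p q : ℝ) (hM : A*D - B*C = 1) (hB : B ≠ 0)
    (a b : ℝ) (ha : 0 < a) (hpa : p ≠ a) :
    W19 A B D p q haar
        (fun t => Complex.exp (-Complex.I * (A:ℂ) * (t:ℂ)^2 / (2*(B:ℂ)))) a b
      = ((Complex.I * (B:ℂ)) ^ ((1:ℂ)/2) / ((Real.sqrt (2 * Real.pi * a) : ℝ) : ℂ)) *
        (((a - p : ℝ) : ℂ))⁻¹ *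
        Complex.exp ((Complex.I / (2*(B:ℂ))) *
          ((-2*a*(D*p - B*q) + D*(a^2+p^2) : ℝ) : ℂ)) *
        Complex.exp (Complex.I * ((b*(p-a)/B : ℝ) : ℂ)) *
        (2 * Complex.exp (Complex.I * ((a*(p-a)/(2*B) : ℝ) : ℂ)) - 1
          - Complex.exp (Complex.I * ((a*(p-a)/B : ℝ) : ℂ))) :=
  sawt_haar_chirp_general A B D p q hB a b ha hpa
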